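/- Let {X^r = Σ_n w_n^r α^n}_{r=1,...,R} be a solution of the system X^r = ∅ + sign(η_r)·α·B_+^{a_r}(X^r ⧢_Θ Q), Q = Π_{r'=1}^R (X^{r'})^{⧢_Θ η_{r'}}, in H_W[[α]], and let φ = exp_⋆(Lσ) : H_W → ℂ[L] be the Feynman rules associated to an infinitesimal character σ with σ(∅) = 0. Then the log expansion G^r(α,L) = Σ_n φ(w_n^r) α^n is of triangular form: for each n the coefficient φ(w_n^r) is a polynomial of degree at most n in L, i.e. G^r(α,L) = Σ_{i≥0} Σ_{j=0}^{i} b^r_{i,j} α^i L^j for some b^r_{i,j} ∈ ℂ. -/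

import Mathlib

open scoped TensorProduct
noncomputable section

variable {Ω : Type*}

/-- The free `ℂ`-vector space on words over the alphabet `Ω`. -/
abbrev HW (Ω : Type*) := List Ω →₀ ℂ

/-- Quasi-shuffle product of two words. -/
def qshW (Θ : Ω → Ω → Ω) : List Ω → List Ω → HW Ω
  | [], v => Finsupp.single v 1
  | u, [] => Finsupp.single u 1
  | a :: u, b :: v =>
      Finsupp.mapDomain (a :: ·) (qshW Θ u (b :: v)) +
      Finsupp.mapDomain (b :: ·) (qshW Θ (a :: u) v) +
      Finsupp.mapDomain (Θ a b :: ·) (qshW Θ u v)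
  termination_by u v => u.length + v.length

/-- Bilinear extension of the quasi-shuffle product. -/
def qshL (Θ : Ω → Ω → Ω) : HW Ω →ₗ[ℂ] HW Ω →ₗ[ℂ] HW Ω :=
  Finsupp.lift (HW Ω →ₗ[ℂ] HW Ω) ℂ (List Ω) fun u =>
    Finsupp.lift (HW Ω) ℂ (List Ω) fun v => qshW Θ u v

/-- Deconcatenation coproduct `Δ(w) = Σ_{uv = w} v ⊗ u`. -/
def deconcat : HW Ω →ₗ[ℂ] HW Ω ⊗[ℂ] HW Ω :=
  Finsupp.lift (HW Ω ⊗[ℂ] HW Ω) ℂ (List Ω) fun w =>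
    ∑ i ∈ Finset.range (w.length + 1),
      Finsupp.single (w.drop i) (1 : ℂ) ⊗ₜ[ℂ] Finsupp.single (w.take i) (1 : ℂ)

/-- The counit `δ_∅`: indicator of the empty word. -/
def counitW : HW Ω →ₗ[ℂ] ℂ :=
  Finsupp.lift ℂ ℂ (List Ω) fun w => match w with | [] => 1 | _ => 0

/-- The convolution product on `Hom(H_W, ℂ)`. -/
def convC (f g : HW Ω →ₗ[ℂ] ℂ) : HW Ω →ₗ[ℂ] ℂ :=
  LinearMap.mul' ℂ ℂ ∘ₗ TensorProduct.map f g ∘ₗ deconcat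

/-- Convolution powers `σ^{⋆k}` with `σ^{⋆0} = 1ε`;  the Feynman rules
`φ = exp_⋆(Lσ)` have `[L^k] φ = σ^{⋆k}/k!`. -/
def convCPow (σ : HW Ω →ₗ[ℂ] ℂ) : ℕ → (HW Ω →ₗ[ℂ] ℂ)
  | 0 => counitW
  | n + 1 => convC σ (convCPow σ n)

/-- `B_+^a`: the linear map prepending the letter `a` to each word. -/
def Bplus (a : Ω) : HW Ω →ₗ[ℂ] HW Ω :=
  Finsupp.lmapDomain ℂ ℂ (a :: ·)

/-- The unit `∅` of the ring `H_W[[α]]`, as coefficient function. -/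
def sone : ℕ → HW Ω := fun n => if n = 0 then Finsupp.single [] 1 else 0

/-- Cauchy product of formal series in `H_W[[α]]`. -/
def smul' (Θ : Ω → Ω → Ω) (f g : ℕ → HW Ω) : ℕ → HW Ω :=
  fun n => ∑ i ∈ Finset.range (n + 1), qshL Θ (f i) (g (n - i))

/-- Powers of a formal series in `H_W[[α]]`. -/
def spow (Θ : Ω → Ω → Ω) (f : ℕ → HW Ω) : ℕ → (ℕ → HW Ω)
  | 0 => sone
  | m + 1 => smul' Θ f (spow Θ f m)

/-- Product of a list of formal series in `H_W[[α]]`. -/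
def sprod (Θ : Ω → Ω → Ω) : List (ℕ → HW Ω) → (ℕ → HW Ω)
  | [] => sone
  | f :: t => smul' Θ f (sprod Θ t)


/-!
The coefficient `w_n` of `α^n` in each `X^r` is a combination of words of length at most `n`:
`∅` has length `0`, `B_+` adds one letter, and the quasi-shuffle of words of lengths `p` and `q`
only produces words of length `≤ p + q`. On the other hand `σ(∅) = 0` makes `σ^{⋆k}` vanish on
words of length `< k`, since each of the `k` factors must receive a nonempty subword. Hence
`σ^{⋆k}(w_n) = 0` for `k > n`, and `φ(w_n) = Σ_k σ^{⋆k}(w_n) L^k / k!` has degree at most `n`.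
-/

def lengthFiltration (Ω : Type*) (n : ℕ) : Submodule ℂ (HW Ω) :=
  Finsupp.supported ℂ ℂ {w : List Ω | w.length ≤ n}

section LengthFiltration

theorem lengthFiltration_eq_span (n : ℕ) :
    lengthFiltration Ω n =
      Submodule.span ℂ ((fun w => Finsupp.single w 1) '' {w : List Ω | w.length ≤ n}) :=
  Finsupp.supported_eq_span_single ℂ _

theorem lengthFiltration_mono {m n : ℕ} (h : m ≤ n) :
    lengthFiltration Ω m ≤ lengthFiltration Ω n :=
  Finsupp.supported_mono fun _ hw => le_trans hw h

theorem single_mem_lengthFiltration {w : List Ω} {n : ℕ} (h : w.length ≤ n) (c : ℂ) :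
    Finsupp.single w c ∈ lengthFiltration Ω n :=
  Finsupp.single_mem_supported ℂ c h

theorem mapDomain_cons_mem_lengthFiltration (a : Ω) {n : ℕ} {f : HW Ω}
    (hf : f ∈ lengthFiltration Ω n) :
    Finsupp.mapDomain (a :: ·) f ∈ lengthFiltration Ω (n + 1) := by
  classical
  intro w hw
  obtain ⟨w', hw', rfl⟩ := Finset.mem_image.mp (Finsupp.mapDomain_support hw)
  simpa using hf hw'

theorem Bplus_mem_lengthFiltration (a : Ω) {n : ℕ} {f : HW Ω}
    (hf : f ∈ lengthFiltration Ω n) : Bplus a f ∈ lengthFiltration Ω (n + 1) :=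
  mapDomain_cons_mem_lengthFiltration a hf

theorem qshW_mem_lengthFiltration (Θ : Ω → Ω → Ω) :
    ∀ u v : List Ω, qshW Θ u v ∈ lengthFiltration Ω (u.length + v.length)
  | [], v => by
      rw [qshW]
      exact single_mem_lengthFiltration (by simp) 1
  | a :: u, [] => by
      rw [qshW]
      · exact single_mem_lengthFiltration (by simp) 1
      · simp
  | a :: u, b :: v => by
      rw [qshW]
      refine add_mem (add_mem ?_ ?_) ?_ <;>
        refine lengthFiltration_mono ?_ (mapDomain_cons_mem_lengthFiltration _
          (qshW_mem_lengthFiltration Θ _ _)) <;>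
        simp only [List.length_cons] <;> omega
  termination_by u v => u.length + v.length

theorem qshL_single_single (Θ : Ω → Ω → Ω) (u v : List Ω) (r c : ℂ) :
    qshL Θ (Finsupp.single u r) (Finsupp.single v c) = (r * c) • qshW Θ u v := by
  simp [qshL, Finsupp.lift_apply, Finsupp.sum_single_index, smul_smul]

theorem qshL_mem_lengthFiltration (Θ : Ω → Ω → Ω) {p q : ℕ} {f g : HW Ω}
    (hf : f ∈ lengthFiltration Ω p) (hg : g ∈ lengthFiltration Ω q) :
    qshL Θ f g ∈ lengthFiltration Ω (p + q) := by
  have hmap₂ : Submodule.map₂ (qshL Θ) (lengthFiltration Ω p) (lengthFiltration Ω q) ≤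
      lengthFiltration Ω (p + q) := by
    rw [lengthFiltration_eq_span, lengthFiltration_eq_span, Submodule.map₂_span_span,
      Submodule.span_le]
    rintro _ ⟨_, ⟨u, hu, rfl⟩, _, ⟨v, hv, rfl⟩, rfl⟩
    dsimp only
    rw [qshL_single_single]
    exact Submodule.smul_mem _ _
      (lengthFiltration_mono (add_le_add hu hv) (qshW_mem_lengthFiltration Θ u v))
  exact hmap₂ (Submodule.apply_mem_map₂ _ hf hg)

theorem qshL_single_nil (Θ : Ω → Ω → Ω) (g : HW Ω) :
    qshL Θ (Finsupp.single [] 1) g = g := by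
  have h : qshL Θ (Finsupp.single ([] : List Ω) 1) = LinearMap.id := by
    refine Finsupp.lhom_ext fun v c => ?_
    rw [qshL_single_single, qshW]
    simp [Finsupp.smul_single]
  rw [h, LinearMap.id_apply]

end LengthFiltration

section ConvolutionPowers

theorem convC_single (f g : HW Ω →ₗ[ℂ] ℂ) (w : List Ω) :
    convC f g (Finsupp.single w 1) =
      ∑ i ∈ Finset.range (w.length + 1),
        f (Finsupp.single (w.drop i) 1) * g (Finsupp.single (w.take i) 1) := by
  simp [convC, deconcat, Finsupp.lift_apply, Finsupp.sum_single_index, map_sum,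
    TensorProduct.map_tmul, LinearMap.mul'_apply]

variable {σ : HW Ω →ₗ[ℂ] ℂ}

theorem convCPow_single_eq_zero (hempty : σ (Finsupp.single [] 1) = 0) :
    ∀ {k : ℕ} {w : List Ω}, w.length < k → convCPow σ k (Finsupp.single w 1) = 0
  | 0, _, hw => absurd hw (Nat.not_lt_zero _)
  | k + 1, w, hw => by
      rw [convCPow, convC_single]
      refine Finset.sum_eq_zero fun i hi => ?_
      rcases (Nat.lt_succ_iff.mp (Finset.mem_range.mp hi)).eq_or_lt with rfl | hlt
      · rw [List.drop_length, hempty, zero_mul]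
      · rw [convCPow_single_eq_zero hempty (by rw [List.length_take]; omega), mul_zero]

theorem convCPow_eq_zero_of_mem_lengthFiltration (hempty : σ (Finsupp.single [] 1) = 0)
    {n k : ℕ} (hk : n < k) {f : HW Ω} (hf : f ∈ lengthFiltration Ω n) :
    convCPow σ k f = 0 := by
  have hker : lengthFiltration Ω n ≤ LinearMap.ker (convCPow σ k) := by
    rw [lengthFiltration_eq_span, Submodule.span_le]
    rintro _ ⟨w, hw, rfl⟩
    exact convCPow_single_eq_zero hempty (lt_of_le_of_lt hw hk)
  exact hker hf

end ConvolutionPowers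

def LengthBoundedUpTo (m : ℕ) (f : ℕ → HW Ω) : Prop :=
  ∀ i ≤ m, f i ∈ lengthFiltration Ω i

namespace LengthBoundedUpTo

variable {Θ : Ω → Ω → Ω} {m : ℕ}

theorem sone : LengthBoundedUpTo m (sone : ℕ → HW Ω) := by
  intro i _
  unfold _root_.sone
  split
  · exact single_mem_lengthFiltration (by simp) 1
  · exact zero_mem _

theorem smul' {f g : ℕ → HW Ω} (hf : LengthBoundedUpTo m f) (hg : LengthBoundedUpTo m g) :
    LengthBoundedUpTo m (smul' Θ f g) := by
  intro i hi
  refine sum_mem fun j hj => ?_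
  have hji : j ≤ i := Nat.lt_succ_iff.mp (Finset.mem_range.mp hj)
  have := qshL_mem_lengthFiltration Θ (hf j (hji.trans hi))
    (hg (i - j) ((i.sub_le j).trans hi))
  rwa [Nat.add_sub_cancel' hji] at this

theorem spow {f : ℕ → HW Ω} (hf : LengthBoundedUpTo m f) :
    ∀ k, LengthBoundedUpTo m (spow Θ f k)
  | 0 => sone
  | k + 1 => hf.smul' (spow hf k)

theorem sprod : ∀ {l : List (ℕ → HW Ω)}, (∀ f ∈ l, LengthBoundedUpTo m f) →
    LengthBoundedUpTo m (sprod Θ l)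
  | [], _ => sone
  | f :: _, hl =>
    (hl f List.mem_cons_self).smul' (sprod fun g hg => hl g (List.mem_cons_of_mem f hg))

/-- Reading off `(f ⧢_Θ g)_i = ∅_i` gives `g_i = ∅_i - Σ_{j<i} f_{j+1} ⧢_Θ g_{i-j-1}`, which
determines `g` recursively. -/
theorem of_smul'_eq_sone {f g : ℕ → HW Ω} (hf0 : f 0 = Finsupp.single [] 1)
    (hfg : _root_.smul' Θ f g = _root_.sone) (hf : LengthBoundedUpTo m f) :
    LengthBoundedUpTo m g := by
  intro i
  induction i using Nat.strong_induction_on with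
  | _ i ih =>
    intro hi
    have hcoeff := congrFun hfg i
    rw [_root_.smul', Finset.sum_range_succ', Nat.sub_zero, hf0, qshL_single_nil] at hcoeff
    rw [eq_sub_of_add_eq' hcoeff]
    refine sub_mem (sone i hi) (sum_mem fun j hj => ?_)
    have hji : j + 1 ≤ i := Finset.mem_range.mp hj
    have := qshL_mem_lengthFiltration Θ (hf (j + 1) (hji.trans hi))
      (ih (i - (j + 1)) (by omega) (by omega))
    rwa [Nat.add_sub_cancel' hji] at this

end LengthBoundedUpTo

theorem Polynomial.exists_degree_le_coeff_eq {R : Type*} [Semiring R] (c : ℕ → R) (n : ℕ)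
    (hc : ∀ j, n < j → c j = 0) :
    ∃ p : Polynomial R, p.degree ≤ n ∧ ∀ j, p.coeff j = c j := by
  classical
  refine ⟨∑ j ∈ Finset.range (n + 1), Polynomial.monomial j (c j), ?_, fun j => ?_⟩
  · refine (Polynomial.degree_sum_le _ _).trans (Finset.sup_le fun j hj => ?_)
    refine (Polynomial.degree_monomial_le _ _).trans ?_
    exact_mod_cast Nat.lt_succ_iff.mp (Finset.mem_range.mp hj)
  · simp only [Polynomial.finsetSum_coeff, Polynomial.coeff_monomial, Finset.sum_ite_eq',
      Finset.mem_range]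
    split_ifs with hj
    · rfl
    · exact (hc j (by omega)).symm

theorem log_expansion_is_triangular_general
    (Ω : Type*) (Θ : Ω → Ω → Ω)
    (R : ℕ) (a : Fin R → Ω) (η : Fin R → ℤ)
    (X Xinv : Fin R → ℕ → HW Ω)
    (hinv : ∀ r, smul' Θ (X r) (Xinv r) = sone)
    (hX0 : ∀ r, X r 0 = Finsupp.single [] 1)
    (hXsucc : ∀ r n,
      X r (n + 1) =
        ((η r).sign : ℂ) •
          Bplus (a r)
            (smul' Θ (X r)
              (sprod Θ (List.ofFn fun r' : Fin R =>
                spow Θ (if 0 < η r' then X r' else Xinv r') (η r').natAbs))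
              n))
    (σ : HW Ω →ₗ[ℂ] ℂ)
    (hempty : σ (Finsupp.single ([] : List Ω) 1) = 0) :
    ∀ (r : Fin R) (n : ℕ),
      (∀ k : ℕ, n < k → convCPow σ k (X r n) = 0) ∧
      ∃ p : Polynomial ℂ,
        p.degree ≤ (n : ℕ) ∧
        ∀ j : ℕ, p.coeff j = (j.factorial : ℂ)⁻¹ * convCPow σ j (X r n) := by
  have hbounded : ∀ n r, LengthBoundedUpTo n (X r) := by
    intro n
    induction n with
    | zero =>
      intro r i hi
      rw [Nat.le_zero.mp hi, hX0]
      exact single_mem_lengthFiltration le_rfl 1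
    | succ n ih =>
      have hinvB r := LengthBoundedUpTo.of_smul'_eq_sone (hX0 r) (hinv r) (ih r)
      intro r i hi
      rcases hi.lt_or_eq with hi | rfl
      · exact ih r i (Nat.lt_succ_iff.mp hi)
      rw [hXsucc]
      refine Submodule.smul_mem _ _ (Bplus_mem_lengthFiltration _ ?_)
      refine (ih r).smul' (LengthBoundedUpTo.sprod fun f hf => ?_) n le_rfl
      obtain ⟨r', rfl⟩ := List.mem_ofFn.mp hf
      split_ifs
      exacts [(ih r').spow _, (hinvB r').spow _]
  intro r n
  have hvanish k (hk : n < k) : convCPow σ k (X r n) = 0 :=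
    convCPow_eq_zero_of_mem_lengthFiltration hempty hk (hbounded n r n le_rfl)
  exact ⟨hvanish,
    Polynomial.exists_degree_le_coeff_eq _ n fun j hj => by rw [hvanish j hj, mul_zero]⟩

/-- **Corollary 3: the log expansion is triangular.**  Let `{X^r = Σ_n w_n^r α^n}`
be a solution of the Dyson–Schwinger system
`X^r = ∅ + sign(η_r)·α·B_+^{a_r}(X^r ⧢_Θ Q)`, `Q = Π_{r'} (X^{r'})^{η_{r'}}`,
and let `φ = exp_⋆(Lσ)` be the Feynman rules of an infinitesimal character `σ`
with `σ(∅) = 0` (so `[L^k] φ = σ^{⋆k}/k!`).  Then for every `r` and `n` the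
coefficient `φ(w_n^r)` of `α^n` in `G^r(α, L)` is a polynomial of degree at
most `n` in `L`: `G^r(α,L) = Σ_{i≥0} Σ_{j=0}^{i} b^r_{i,j} α^i L^j`. -/
theorem log_expansion_is_triangular
    (Ω : Type*) (Θ : Ω → Ω → Ω)
    (hcomm : ∀ a b : Ω, Θ a b = Θ b a)
    (hassoc : ∀ a b c : Ω, Θ (Θ a b) c = Θ a (Θ b c))
    (R : ℕ) (a : Fin R → Ω) (η : Fin R → ℤ) (hη : ∀ r, η r ≠ 0)
    (X Xinv : Fin R → ℕ → HW Ω)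
    (hinv : ∀ r, smul' Θ (X r) (Xinv r) = sone)
    (hX0 : ∀ r, X r 0 = Finsupp.single [] 1)
    (hXsucc : ∀ r n,
      X r (n + 1) =
        ((η r).sign : ℂ) •
          Bplus (a r)
            (smul' Θ (X r)
              (sprod Θ (List.ofFn fun r' : Fin R =>
                spow Θ (if 0 < η r' then X r' else Xinv r') (η r').natAbs))
              n))
    (σ : HW Ω →ₗ[ℂ] ℂ)
    (hinf : ∀ x y : HW Ω,
      σ (qshL Θ x y) = σ x * counitW y + counitW x * σ y)
    (hempty : σ (Finsupp.single ([] : List Ω) 1) = 0) :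
    ∀ (r : Fin R) (n : ℕ),
      (∀ k : ℕ, n < k → convCPow σ k (X r n) = 0) ∧
      ∃ p : Polynomial ℂ,
        p.degree ≤ (n : ℕ) ∧
        ∀ j : ℕ, p.coeff j = (j.factorial : ℂ)⁻¹ * convCPow σ j (X r n) :=
  log_expansion_is_triangular_general Ω Θ R a η X Xinv hinv hX0 hXsucc σ hempty
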